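/- arXiv:math/0611432 — 2 statements merged into one kernel-verified Lean document; each statement's English description precedes it below -/
import Mathlib

section
/- The covered set after storing the first n files is C^{(n)} = { x ∈ ℝ : Y^{(n)}_x − I^{(n)}_x > 0 }. -/
open MeasureTheory
open scoped Classical

/-- The covering `C^(n)` obtained after storing the first `n` files
`(x_0, l_0), …, (x_{n-1}, l_{n-1})`: `C^(0) = ∅` and
`C^(k+1) = C^(k) ∪ [x_k, y_k)` where `y_k` is the infimum of the `y ≥ x_k`
such that the free space `(C^(k))ᶜ ∩ [x_k, y)` has Lebesgue measure `l_k`. -/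
noncomputable def cover (x l : ℕ → ℝ) : ℕ → Set ℝ
  | 0 => ∅
  | k + 1 =>
      cover x l k ∪
        Set.Ico (x k)
          (sInf {y : ℝ | x k ≤ y ∧
            volume ((cover x l k)ᶜ ∩ Set.Ico (x k) y) = ENNReal.ofReal (l k)})

/-- The process `Y^(n)` : `Y^(n)_0 = 0` and
`Y^(n)_b - Y^(n)_a = Σ_{i < n, x_i ∈ (a,b]} l_i - (b-a)` for `a < b`. -/
noncomputable def Yn (x l : ℕ → ℝ) (n : ℕ) (b : ℝ) : ℝ :=
  (∑ i ∈ Finset.range n, if 0 < x i ∧ x i ≤ b then l i else 0)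
    - (∑ i ∈ Finset.range n, if b < x i ∧ x i ≤ 0 then l i else 0) - b

/-!
Induction on `n`, carrying a second invariant along: the free space `(C⁽ⁿ⁾)ᶜ` has Lebesgue
measure `I⁽ⁿ⁾_a - I⁽ⁿ⁾_b` in `[a, b)`. Storing the next file `(p, L)` adds an upward jump `L` to
`Y` at `p`, which turns the running infimum `I` into `min (I + L) (max I (I p))`. By the
free-space formula, `y` is the first point after `p` where `I` has dropped by `L`; as `Y` only
jumps upwards, `I` is continuous, so `[p, y) = {z ≥ p | I p < I z + L}`, and both invariants
propagate.
-/

open Set Filter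

noncomputable def runningInf (f : ℝ → ℝ) (z : ℝ) : ℝ := sInf (f '' Iic z)

section RunningInf

variable {f : ℝ → ℝ}

theorem runningInf_le {z : ℝ} (hf : BddBelow (f '' Iic z)) : runningInf f z ≤ f z :=
  csInf_le hf (mem_image_of_mem f self_mem_Iic)

theorem runningInf_le_of_le {y z : ℝ} (hf : BddBelow (f '' Iic z)) (hyz : y ≤ z) :
    runningInf f z ≤ f y :=
  csInf_le hf (mem_image_of_mem f hyz)

theorem runningInf_eq_of_antitone (hf : Antitone f) (z : ℝ) : runningInf f z = f z :=
  IsLeast.csInf_eq ⟨mem_image_of_mem f self_mem_Iic, forall_mem_image.2 fun _ hy => hf hy⟩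

theorem runningInf_antitone (hf : ∀ z, BddBelow (f '' Iic z)) : Antitone (runningInf f) :=
  fun _ b hab => csInf_le_csInf (hf b) (nonempty_Iic.image f) (image_mono (Iic_subset_Iic.2 hab))

theorem runningInf_le_add_sub (hf : ∀ z, BddBelow (f '' Iic z))
    (hmono : Monotone fun z => f z + z) {a b : ℝ} (hab : a ≤ b) :
    runningInf f a ≤ runningInf f b + (b - a) := by
  rw [← sub_le_iff_le_add]
  refine le_csInf (nonempty_Iic.image f) (forall_mem_image.2 fun y (hy : y ≤ b) => ?_)
  rcases le_total y a with hya | hay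
  · linarith [runningInf_le_of_le (hf a) hya]
  · linarith [runningInf_le (hf a), hmono hay]

theorem lipschitzWith_runningInf (hf : ∀ z, BddBelow (f '' Iic z))
    (hmono : Monotone fun z => f z + z) : LipschitzWith 1 (runningInf f) := by
  refine LipschitzWith.of_le_add fun a b => ?_
  rcases le_total a b with hab | hba
  · linarith [runningInf_le_add_sub hf hmono hab, le_abs_self (b - a), Real.dist_eq a b,
      abs_sub_comm a b]
  · linarith [runningInf_antitone hf hba, dist_nonneg (x := a) (y := b)]

theorem runningInf_add_step {g : ℝ → ℝ} {p L c : ℝ} (hf : ∀ z, BddBelow (f '' Iic z))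
    (hmono : Monotone fun z => f z + z) (hL : 0 ≤ L)
    (hg : ∀ z, g z = f z + (if p ≤ z then L else 0) - c) (z : ℝ) :
    runningInf g z = min (runningInf f z + L) (max (runningInf f z) (runningInf f p)) - c := by
  have hlow : ∀ y ∈ Iic z,
      min (runningInf f z + L) (max (runningInf f z) (runningInf f p)) - c ≤ g y := by
    intro y hy
    rw [hg]
    split_ifs with hpy
    · linarith [min_le_left (runningInf f z + L) (max (runningInf f z) (runningInf f p)),
        runningInf_le_of_le (hf z) hy]
    · have := max_le (runningInf_le_of_le (hf z) hy) (runningInf_le_of_le (hf p) (not_le.1 hpy).le)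
      linarith [min_le_right (runningInf f z + L) (max (runningInf f z) (runningInf f p))]
  have hbdd : BddBelow (g '' Iic z) := ⟨_, forall_mem_image.2 hlow⟩
  refine le_antisymm ?_ (le_csInf (nonempty_Iic.image g) (forall_mem_image.2 hlow))
  have h_jump : runningInf g z - L + c ≤ runningInf f z := by
    refine le_csInf (nonempty_Iic.image f) (forall_mem_image.2 fun y hy => ?_)
    have := runningInf_le_of_le hbdd hy
    rw [hg] at this
    split_ifs at this <;> linarith
  have h_before : runningInf g z + c ≤ max (runningInf f z) (runningInf f p) := by
    rcases lt_or_ge z p with hzp | hpz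
    · refine le_max_of_le_left <|
        le_csInf (nonempty_Iic.image f) (forall_mem_image.2 fun y hy => ?_)
      have := runningInf_le_of_le hbdd hy
      rw [hg, if_neg (not_le.2 (lt_of_le_of_lt hy hzp))] at this
      linarith
    · refine le_max_of_le_right <|
        le_csInf (nonempty_Iic.image f) (forall_mem_image.2 fun y hy => ?_)
      -- `g = f - c` just left of `p`, and `f` jumps only upwards
      refine le_of_forall_pos_le_add fun ε hε => ?_
      have hyε : y - ε < p := by linarith [mem_Iic.1 hy]
      have := runningInf_le_of_le hbdd (hyε.le.trans hpz)
      rw [hg, if_neg (not_le.2 hyε)] at this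
      linarith [hmono (sub_le_self y hε.le)]
  rw [le_sub_iff_add_le]
  exact le_min (by linarith) h_before

end RunningInf

section Drop

variable {I : ℝ → ℝ} {p L : ℝ}

theorem exists_drop_eq_of_le (hc : Continuous I) {z : ℝ} (hpz : p ≤ z) (hL : 0 ≤ L)
    (hLz : L ≤ I p - I z) : ∃ y ∈ Icc p z, I p - I y = L :=
  intermediate_value_Icc hpz (by fun_prop : Continuous fun y => I p - I y).continuousOn
    ⟨by simpa using hL, hLz⟩

theorem exists_isLeast_drop_eq (hc : Continuous I) (ht : Tendsto I atTop atBot) (hL : 0 ≤ L)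
    (p : ℝ) : ∃ q, IsLeast {y | p ≤ y ∧ I p - I y = L} q := by
  obtain ⟨M, hM, hpM⟩ :=
    ((ht.eventually (eventually_le_atBot (I p - L))).and (eventually_ge_atTop p)).exists
  obtain ⟨y, hy, hIy⟩ := exists_drop_eq_of_le hc hpM hL (by linarith)
  have hclosed : IsClosed {y | p ≤ y ∧ I p - I y = L} :=
    (isClosed_le continuous_const continuous_id).inter (isClosed_eq (by fun_prop) continuous_const)
  exact ⟨_, hclosed.isLeast_csInf ⟨y, hy.1, hIy⟩ ⟨p, fun _ h => h.1⟩⟩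

theorem Ico_eq_of_isLeast_drop_eq (hc : Continuous I) (ha : Antitone I) {q : ℝ}
    (hq : IsLeast {y | p ≤ y ∧ I p - I y = L} q) : Ico p q = {z | p ≤ z ∧ I p < I z + L} := by
  obtain ⟨⟨hpq, hIq⟩, hleast⟩ := hq
  ext z
  refine ⟨fun ⟨hpz, hzq⟩ => ⟨hpz, ?_⟩, fun ⟨hpz, hz⟩ => ⟨hpz, ?_⟩⟩
  · by_contra! h
    obtain ⟨y, hy, hIy⟩ := exists_drop_eq_of_le (L := L) hc hpz (by linarith [ha hpq]) (by linarith)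
    exact (hy.2.trans_lt hzq).not_ge (hleast ⟨hy.1, hIy⟩)
  · by_contra! h
    linarith [ha h]

end Drop

theorem mem_union_iff_lt {C : Set ℝ} {Y I : ℝ → ℝ} {p L : ℝ} (hC : ∀ z, z ∈ C ↔ I z < Y z)
    (hIY : ∀ z, I z ≤ Y z) (ha : Antitone I) (hL : 0 ≤ L) (z : ℝ) :
    z ∈ C ∪ {z | p ≤ z ∧ I p < I z + L} ↔
      min (I z + L) (max (I z) (I p)) < Y z + (if p ≤ z then L else 0) := by
  rw [mem_union, hC, mem_ofPred_eq]
  split_ifs with hpz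
  · rw [max_eq_right (ha hpz), min_lt_iff, add_lt_add_iff_right]
    rcases (hIY z).lt_or_eq with h | h
    · simp [h]
    · simp [h, hpz]
  · rw [max_eq_left (ha (not_le.1 hpz).le), min_eq_right (by linarith), add_zero]
    simp [hpz]

theorem Ico_inter_Ico_eq_clamp {a b p q : ℝ} (hpq : p ≤ q) :
    Ico a b ∩ Ico p q = Ico (max p (min a q)) (max p (min b q)) := by
  ext z
  simp only [mem_inter_iff, mem_Ico, max_def, min_def]
  split_ifs <;> constructor <;> intro h <;> (try constructor) <;> (try constructor) <;> linarith

theorem min_max_eq_sub_clamp {I : ℝ → ℝ} {p q L : ℝ} (ha : Antitone I) (hpq : p ≤ q)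
    (hIq : I q = I p - L) (z : ℝ) :
    min (I z + L) (max (I z) (I p)) = I z - I (max p (min z q)) + I p := by
  rcases le_total z p with hzp | hpz
  · rw [min_eq_left (hzp.trans hpq), max_eq_left hzp, max_eq_left (ha hzp),
      min_eq_right (by linarith [ha hpq])]
    ring
  rcases le_total z q with hzq | hqz
  · rw [min_eq_left hzq, max_eq_right hpz, max_eq_right (ha hpz),
      min_eq_right (by linarith [ha hzq])]
    ring
  · rw [min_eq_right hqz, max_eq_right hpq, max_eq_right (ha hpz),
      min_eq_left (by linarith [ha hqz])]
    linarith

theorem volume_diff_Ico_inter_Ico {E : Set ℝ} {I : ℝ → ℝ} {p q a b : ℝ}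
    (hE : ∀ a b, a ≤ b → volume (E ∩ Ico a b) = ENNReal.ofReal (I a - I b)) (ha : Antitone I)
    (hpq : p ≤ q) (hab : a ≤ b) :
    volume ((E \ Ico p q) ∩ Ico a b) =
      ENNReal.ofReal (I a - I b - (I (max p (min a q)) - I (max p (min b q)))) := by
  have hclamp : max p (min a q) ≤ max p (min b q) := max_le_max le_rfl (min_le_min_right q hab)
  have hsplit :=
    measure_inter_add_sdiff (μ := volume) (E ∩ Ico a b) (measurableSet_Ico (a := p) (b := q))
  rw [inter_assoc, Ico_inter_Ico_eq_clamp hpq, hE _ _ hclamp, hE a b hab] at hsplit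
  rw [sdiff_inter_right_comm, ENNReal.ofReal_sub _ (sub_nonneg.2 (ha hclamp))]
  exact ENNReal.eq_sub_of_add_eq ENNReal.ofReal_ne_top (by rw [add_comm, hsplit])

noncomputable def loadUpTo (x l : ℕ → ℝ) (n : ℕ) (z : ℝ) : ℝ :=
  ∑ i ∈ Finset.range n, if x i ≤ z then l i else 0

section Yn

variable {x l : ℕ → ℝ} {n : ℕ}

theorem Yn_eq_loadUpTo (z : ℝ) : Yn x l n z = loadUpTo x l n z - loadUpTo x l n 0 - z := by
  unfold Yn loadUpTo
  rw [sub_left_inj, ← Finset.sum_sub_distrib, ← Finset.sum_sub_distrib]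
  refine Finset.sum_congr rfl fun i _ => ?_
  split_ifs <;> simp_all <;> linarith

theorem monotone_loadUpTo (hl : ∀ i, 0 ≤ l i) : Monotone (loadUpTo x l n) := fun a b hab =>
  Finset.sum_le_sum fun i _ => by
    split_ifs with ha hb
    exacts [le_rfl, absurd (ha.trans hab) hb, hl i, le_rfl]

theorem loadUpTo_nonneg (hl : ∀ i, 0 ≤ l i) (z : ℝ) : 0 ≤ loadUpTo x l n z :=
  Finset.sum_nonneg fun i _ => by split_ifs; exacts [hl i, le_rfl]

theorem loadUpTo_le_sum (hl : ∀ i, 0 ≤ l i) (z : ℝ) :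
    loadUpTo x l n z ≤ ∑ i ∈ Finset.range n, l i :=
  Finset.sum_le_sum fun i _ => by split_ifs; exacts [le_rfl, hl i]

theorem monotone_Yn_add_self (hl : ∀ i, 0 ≤ l i) : Monotone fun z => Yn x l n z + z := by
  intro a b hab
  simp only [Yn_eq_loadUpTo, sub_add_cancel]
  linarith [monotone_loadUpTo (x := x) (n := n) hl hab]

theorem bddBelow_Yn_image_Iic (hl : ∀ i, 0 ≤ l i) (z : ℝ) : BddBelow (Yn x l n '' Iic z) :=
  ⟨-(∑ i ∈ Finset.range n, l i) - z, forall_mem_image.2 fun y (hy : y ≤ z) => by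
    rw [Yn_eq_loadUpTo]
    linarith [loadUpTo_nonneg (x := x) (n := n) hl y, loadUpTo_le_sum (x := x) (n := n) hl 0]⟩

theorem tendsto_Yn_atBot (hl : ∀ i, 0 ≤ l i) : Tendsto (Yn x l n) atTop atBot := by
  refine tendsto_atBot_mono (fun z => ?_)
    (tendsto_atBot_add_const_left _ (∑ i ∈ Finset.range n, l i) tendsto_neg_atTop_atBot)
  rw [Yn_eq_loadUpTo]
  linarith [loadUpTo_nonneg (x := x) (n := n) hl 0, loadUpTo_le_sum (x := x) (n := n) hl z]

theorem Yn_succ (z : ℝ) : Yn x l (n + 1) z =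
    Yn x l n z + (if x n ≤ z then l n else 0) - (if x n ≤ 0 then l n else 0) := by
  simp only [Yn_eq_loadUpTo, loadUpTo, Finset.sum_range_succ]
  ring

theorem Yn_zero : Yn x l 0 = fun z => -z := by
  ext z
  simp [Yn]

end Yn

section Cover

variable {x l : ℕ → ℝ}

def CoverInvariant (x l : ℕ → ℝ) (k : ℕ) : Prop :=
  (∀ z, z ∈ cover x l k ↔ runningInf (Yn x l k) z < Yn x l k z) ∧
    ∀ a b, a ≤ b → volume ((cover x l k)ᶜ ∩ Ico a b) =
      ENNReal.ofReal (runningInf (Yn x l k) a - runningInf (Yn x l k) b)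

theorem coverInvariant_zero : CoverInvariant x l 0 := by
  have hI : runningInf (Yn x l 0) = Yn x l 0 :=
    funext (runningInf_eq_of_antitone (Yn_zero ▸ fun _ _ h => neg_le_neg h))
  refine ⟨fun z => by simp [cover, hI], fun a b _ => ?_⟩
  rw [hI, Yn_zero, cover, compl_empty, univ_inter, Real.volume_Ico, neg_sub_neg]

theorem CoverInvariant.succ (hl : ∀ i, 0 ≤ l i) {k : ℕ} (h : CoverInvariant x l k) :
    CoverInvariant x l (k + 1) := by
  obtain ⟨hmem, hfree⟩ := h
  set I := runningInf (Yn x l k)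
  have hbdd := bddBelow_Yn_image_Iic (x := x) (n := k) hl
  have hmono := monotone_Yn_add_self (x := x) (n := k) hl
  have hanti : Antitone I := runningInf_antitone hbdd
  have hcont : Continuous I := (lipschitzWith_runningInf hbdd hmono).continuous
  obtain ⟨q, hq⟩ := exists_isLeast_drop_eq hcont
    (tendsto_atBot_mono (fun z => runningInf_le (hbdd z)) (tendsto_Yn_atBot hl)) (hl k) (x k)
  have hdrop : {y | x k ≤ y ∧ volume ((cover x l k)ᶜ ∩ Ico (x k) y) = ENNReal.ofReal (l k)} =
      {y | x k ≤ y ∧ I (x k) - I y = l k} := by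
    ext y
    refine and_congr_right fun hy => ?_
    rw [hfree _ _ hy, ENNReal.ofReal_eq_ofReal_iff (sub_nonneg.2 (hanti hy)) (hl k)]
  have hcover : cover x l (k + 1) = cover x l k ∪ Ico (x k) q := by
    rw [cover, hdrop, hq.csInf_eq]
  have hrunningInf := runningInf_add_step hbdd hmono (hl k) (Yn_succ (x := x) (l := l) (n := k))
  have hIq : I q = I (x k) - l k := by linarith [hq.1.2]
  refine ⟨fun z => ?_, fun a b hab => ?_⟩
  · rw [hcover, Ico_eq_of_isLeast_drop_eq hcont hanti hq,
      mem_union_iff_lt hmem (fun z => runningInf_le (hbdd z)) hanti (hl k), hrunningInf, Yn_succ,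
      sub_lt_sub_iff_right]
  · rw [hcover, compl_union, ← sdiff_eq, volume_diff_Ico_inter_Ico hfree hanti hq.1.1 hab,
      hrunningInf, hrunningInf, min_max_eq_sub_clamp hanti hq.1.1 hIq,
      min_max_eq_sub_clamp hanti hq.1.1 hIq]
    congr 1
    ring

theorem coverInvariant (hl : ∀ i, 0 ≤ l i) (k : ℕ) : CoverInvariant x l k := by
  induction k with
  | zero => exact coverInvariant_zero
  | succ k ih => exact ih.succ hl

end Cover

theorem cover_eq_pos_set_general
    (x l : ℕ → ℝ) (n : ℕ) (hl : ∀ i, 0 < l i) :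
    cover x l n = {z : ℝ | Yn x l n z - sInf (Yn x l n '' Set.Iic z) > 0} := by
  ext z
  rw [mem_ofPred_eq, gt_iff_lt, sub_pos]
  exact (coverInvariant (fun i => (hl i).le) n).1 z

/-- The covered set after storing the first `n` files is
`C^(n) = { z ∈ ℝ : Y^(n)_z - I^(n)_z > 0 }`, where `I^(n)_z = inf{ Y^(n)_y : y ≤ z }`. -/
theorem cover_eq_pos_set
    (x l : ℕ → ℝ) (n : ℕ) (hn : 1 ≤ n) (hl : ∀ i, 0 < l i) :
    cover x l n = {z : ℝ | Yn x l n z - sInf (Yn x l n '' Set.Iic z) > 0} :=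
  cover_eq_pos_set_general x l n hl
end

section
/- Let C > 0 and assume ν̄(x) ~ C x^{−2} as x → ∞ (i.e. x² ν̄(x) → C). Then lim_{y→0⁺} (y log(1/y))^{−1} ∫_0^∞ (1 − e^{−yu}) ν̄(u) du = C. -/
open MeasureTheory Filter Set Real Topology

/-!
Write `w_y(u) = 1 - e^{-yu}`. The layer-cake formula gives `∫_0^∞ ν̄ = ∫ l⁺ dν < ∞`, and
`w_y(u) ≤ yu`, so the integral over `(0, A]` is `O(y)`. Beyond `A` we have `ν̄(u) = (C ± δ)/u²`,
so the rest is `(C ± δ) J_A(y)` with `J_A(y) = ∫_A^∞ w_y(u)/u² du`. Splitting `J_A` at `1/y`,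
using `w_y(u) = yu + O((yu)²)` below `1/y` and `w_y ≤ 1` above it, gives
`J_A(y) = y log(1/y) + O(y)`.
-/

lemma one_sub_exp_neg_nonneg {x : ℝ} (hx : 0 ≤ x) : 0 ≤ 1 - exp (-x) := by
  linarith [exp_le_one_iff.mpr (neg_nonpos.mpr hx)]

lemma one_sub_exp_neg_le_self (x : ℝ) : 1 - exp (-x) ≤ x := by
  linarith [add_one_le_exp (-x)]

lemma one_sub_exp_neg_le_one (x : ℝ) : 1 - exp (-x) ≤ 1 := by
  linarith [exp_pos (-x)]

lemma abs_one_sub_exp_neg_sub_self_le {x : ℝ} (hx₀ : 0 ≤ x) (hx₁ : x ≤ 1) :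
    |1 - exp (-x) - x| ≤ x ^ 2 := by
  calc |1 - exp (-x) - x| = |exp (-x) - 1 - -x| := by rw [← abs_neg]; congr 1; ring
    _ ≤ (-x) ^ 2 := abs_exp_sub_one_sub_id_le (by rwa [abs_neg, abs_of_nonneg hx₀])
    _ = x ^ 2 := neg_sq x

lemma integrableOn_Ioi_inv_sq {R : ℝ} (hR : 0 < R) :
    IntegrableOn (fun u : ℝ => (u ^ 2)⁻¹) (Ioi R) :=
  (integrableOn_Ioi_rpow_of_lt (a := -2) (by norm_num) hR).congr_fun
    (fun u hu => by dsimp only; rw [rpow_neg (hR.trans hu).le, rpow_two]) measurableSet_Ioi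

lemma integral_Ioi_inv_sq {R : ℝ} (hR : 0 < R) : ∫ u in Ioi R, (u ^ 2)⁻¹ = R⁻¹ := by
  rw [← setIntegral_congr_fun measurableSet_Ioi
      (fun u (hu : R < u) => by dsimp only; rw [rpow_neg (hR.trans hu).le, rpow_two] : EqOn
        (fun u : ℝ => u ^ (-2 : ℝ)) (fun u => (u ^ 2)⁻¹) (Ioi R)),
    integral_Ioi_rpow_of_lt (by norm_num) hR]
  norm_num [rpow_neg_one]

lemma integrableOn_one_sub_exp_mul {g : ℝ → ℝ} {a y : ℝ} (hg : IntegrableOn g (Ioi a))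
    (ha : 0 ≤ a) (hy : 0 ≤ y) :
    IntegrableOn (fun u => (1 - exp (-(y * u))) * g u) (Ioi a) := by
  refine hg.bdd_mul (c := 1) (by fun_prop) ?_
  filter_upwards [ae_restrict_mem measurableSet_Ioi] with u hu
  rw [Real.norm_eq_abs, abs_le]
  exact ⟨by linarith [one_sub_exp_neg_nonneg (mul_nonneg hy (ha.trans (le_of_lt hu)))],
    one_sub_exp_neg_le_one _⟩

section Kernel

variable {y A R : ℝ}

lemma integrableOn_one_sub_exp_div_sq (hy : 0 ≤ y) (hA : 0 < A) :
    IntegrableOn (fun u => (1 - exp (-(y * u))) / u ^ 2) (Ioi A) := by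
  simpa only [div_eq_mul_inv] using
    integrableOn_one_sub_exp_mul (integrableOn_Ioi_inv_sq hA) hA.le hy

lemma setIntegral_one_sub_exp_div_sq_nonneg (hy : 0 ≤ y) (hA : 0 ≤ A) :
    0 ≤ ∫ u in Ioi A, (1 - exp (-(y * u))) / u ^ 2 :=
  setIntegral_nonneg measurableSet_Ioi fun u hu =>
    div_nonneg (one_sub_exp_neg_nonneg (mul_nonneg hy (hA.trans (le_of_lt hu)))) (sq_nonneg u)

lemma setIntegral_one_sub_exp_div_sq_le (hy : 0 ≤ y) (hR : 0 < R) :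
    ∫ u in Ioi R, (1 - exp (-(y * u))) / u ^ 2 ≤ R⁻¹ := by
  rw [← integral_Ioi_inv_sq hR]
  refine setIntegral_mono_on (integrableOn_one_sub_exp_div_sq hy hR) (integrableOn_Ioi_inv_sq hR)
    measurableSet_Ioi fun u hu => ?_
  rw [div_eq_mul_inv]
  exact mul_le_of_le_one_left (by positivity) (one_sub_exp_neg_le_one _)

lemma abs_setIntegral_Ioc_one_sub_exp_div_sq_sub_le (hy : 0 ≤ y) (hA : 0 < A) (hAR : A ≤ R)
    (hyR : y * R ≤ 1) :
    |(∫ u in Ioc A R, (1 - exp (-(y * u))) / u ^ 2) - y * log (R / A)| ≤ y ^ 2 * R := by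
  have hlog : ∫ u in Ioc A R, y * (1 / u) = y * log (R / A) := by
    rw [← intervalIntegral.integral_of_le hAR, intervalIntegral.integral_const_mul,
      integral_one_div fun h => by rw [uIcc_of_le hAR] at h; linarith [h.1]]
  have hint : IntegrableOn (fun u => y * (1 / u)) (Ioc A R) :=
    ((continuousOn_const.mul (continuousOn_const.div continuousOn_id
      fun u hu => (hA.trans_le hu.1).ne')).integrableOn_Icc).mono_set Ioc_subset_Icc_self
  have hpointwise : ∀ u ∈ Ioc A R, ‖(1 - exp (-(y * u))) / u ^ 2 - y * (1 / u)‖ ≤ y ^ 2 := by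
    intro u hu
    have hu₀ : 0 < u := hA.trans hu.1
    have hyu : y * u ≤ 1 := (mul_le_mul_of_nonneg_left hu.2 hy).trans hyR
    have heq : (1 - exp (-(y * u))) / u ^ 2 - y * (1 / u) =
        (1 - exp (-(y * u)) - y * u) / u ^ 2 := by
      field_simp
    rw [Real.norm_eq_abs, heq, abs_div, abs_of_pos (by positivity : (0 : ℝ) < u ^ 2),
      div_le_iff₀ (by positivity)]
    calc |1 - exp (-(y * u)) - y * u| ≤ (y * u) ^ 2 :=
          abs_one_sub_exp_neg_sub_self_le (by positivity) hyu
      _ = y ^ 2 * u ^ 2 := by ring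
  rw [← hlog, ← integral_sub ((integrableOn_one_sub_exp_div_sq hy hA).mono_set
    Ioc_subset_Ioi_self) hint]
  calc _ ≤ y ^ 2 * volume.real (Ioc A R) :=
        norm_setIntegral_le_of_norm_le_const measure_Ioc_lt_top hpointwise
    _ ≤ y ^ 2 * R := by
        rw [Real.volume_real_Ioc_of_le hAR]
        gcongr
        linarith

end Kernel

lemma abs_setIntegral_one_sub_exp_div_sq_sub_le {y A : ℝ} (hy : 0 < y) (hA : 0 < A)
    (hAy : A ≤ 1 / y) :
    |(∫ u in Ioi A, (1 - exp (-(y * u))) / u ^ 2) - y * log (1 / y)| ≤ (2 + |log A|) * y := by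
  have hR : 0 < 1 / y := one_div_pos.2 hy
  have hsplit := setIntegral_union Ioc_disjoint_Ioi_same measurableSet_Ioi
    ((integrableOn_one_sub_exp_div_sq hy.le hA).mono_set Ioc_subset_Ioi_self)
    (integrableOn_one_sub_exp_div_sq hy.le hR)
  rw [Ioc_union_Ioi_eq_Ioi hAy] at hsplit
  have hmid := abs_le.1 (abs_setIntegral_Ioc_one_sub_exp_div_sq_sub_le hy.le hA hAy
    (mul_one_div_cancel hy.ne').le)
  have htail₀ := setIntegral_one_sub_exp_div_sq_nonneg (y := y) hy.le hR.le
  have htail₁ : ∫ u in Ioi (1 / y), (1 - exp (-(y * u))) / u ^ 2 ≤ y :=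
    (setIntegral_one_sub_exp_div_sq_le hy.le hR).trans_eq (by rw [inv_div, div_one])
  rw [log_div hR.ne' hA.ne', sq, mul_assoc, mul_one_div_cancel hy.ne', mul_one] at hmid
  rw [hsplit, abs_le]
  constructor <;> nlinarith [le_abs_self (log A), neg_abs_le (log A)]

lemma tendsto_log_one_div_nhdsGT_zero : Tendsto (fun y : ℝ => log (1 / y)) (𝓝[>] 0) atTop :=
  (tendsto_neg_atBot_atTop.comp tendsto_log_nhdsGT_zero).congr fun y => by
    rw [Function.comp_apply, one_div, log_inv]

lemma tendsto_inv_mul_setIntegral_one_sub_exp_div_sq {A : ℝ} (hA : 0 < A) :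
    Tendsto (fun y => (y * log (1 / y))⁻¹ * ∫ u in Ioi A, (1 - exp (-(y * u))) / u ^ 2)
      (𝓝[>] 0) (𝓝 1) := by
  rw [tendsto_iff_norm_sub_tendsto_zero]
  refine squeeze_zero_norm' ?_ ((tendsto_const_nhds (x := 2 + |log A|)).div_atTop
    tendsto_log_one_div_nhdsGT_zero)
  filter_upwards [self_mem_nhdsWithin,
    nhdsWithin_le_nhds (eventually_lt_nhds (one_div_pos.2 hA)),
    tendsto_log_one_div_nhdsGT_zero.eventually_gt_atTop 0] with y (hy : 0 < y) hyA hL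
  have hyL : 0 < y * log (1 / y) := mul_pos hy hL
  have hJ := abs_setIntegral_one_sub_exp_div_sq_sub_le hy hA ((le_one_div hA hy).2 hyA.le)
  have hdiff : (y * log (1 / y))⁻¹ * (∫ u in Ioi A, (1 - exp (-(y * u))) / u ^ 2) - 1 =
      (y * log (1 / y))⁻¹ *
        ((∫ u in Ioi A, (1 - exp (-(y * u))) / u ^ 2) - y * log (1 / y)) := by
    field_simp
  rw [norm_norm, Real.norm_eq_abs, hdiff, abs_mul, abs_of_pos (inv_pos.2 hyL)]
  calc (y * log (1 / y))⁻¹ * |(∫ u in Ioi A, (1 - exp (-(y * u))) / u ^ 2) - y * log (1 / y)|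
      ≤ (y * log (1 / y))⁻¹ * ((2 + |log A|) * y) := by gcongr
    _ = (2 + |log A|) / log (1 / y) := by field_simp

section Tail

variable {g : ℝ → ℝ} {y A C δ : ℝ}

lemma abs_setIntegral_Ioc_one_sub_exp_mul_le (hg : IntegrableOn g (Ioi 0)) (hy : 0 ≤ y)
    (hA : 0 ≤ A) :
    |∫ u in Ioc 0 A, (1 - exp (-(y * u))) * g u| ≤ y * A * ∫ u in Ioi 0, |g u| := by
  have hbound : ∀ u ∈ Ioc 0 A, ‖(1 - exp (-(y * u))) * g u‖ ≤ y * A * |g u| := by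
    intro u hu
    rw [Real.norm_eq_abs, abs_mul, abs_of_nonneg (one_sub_exp_neg_nonneg (by nlinarith [hu.1]))]
    gcongr
    exact (one_sub_exp_neg_le_self _).trans (mul_le_mul_of_nonneg_left hu.2 hy)
  calc |∫ u in Ioc 0 A, (1 - exp (-(y * u))) * g u|
      ≤ ∫ u in Ioc 0 A, y * A * |g u| :=
        norm_integral_le_of_norm_le ((hg.mono_set Ioc_subset_Ioi_self).abs.const_mul _)
          (ae_restrict_of_forall_mem measurableSet_Ioc hbound)
    _ = y * A * ∫ u in Ioc 0 A, |g u| := integral_const_mul _ _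
    _ ≤ y * A * ∫ u in Ioi 0, |g u| :=
        mul_le_mul_of_nonneg_left (setIntegral_mono_set hg.abs
          (ae_of_all _ fun u => abs_nonneg (g u)) Ioc_subset_Ioi_self.eventuallyLE)
          (mul_nonneg hy hA)

lemma abs_setIntegral_Ioi_one_sub_exp_mul_sub_le (hg : IntegrableOn g (Ioi A)) (hA : 0 < A)
    (hy : 0 ≤ y) (hgC : ∀ u > A, |u ^ 2 * g u - C| ≤ δ) :
    |(∫ u in Ioi A, (1 - exp (-(y * u))) * g u) -
        C * ∫ u in Ioi A, (1 - exp (-(y * u))) / u ^ 2|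
      ≤ δ * ∫ u in Ioi A, (1 - exp (-(y * u))) / u ^ 2 := by
  have hJ := integrableOn_one_sub_exp_div_sq hy hA
  rw [← integral_const_mul C, ← integral_const_mul δ,
    ← integral_sub (integrableOn_one_sub_exp_mul hg hA.le hy) (hJ.const_mul C),
    ← Real.norm_eq_abs]
  refine norm_integral_le_of_norm_le (hJ.const_mul δ) ?_
  filter_upwards [ae_restrict_mem measurableSet_Ioi] with u (hu : A < u)
  have hu₀ : 0 < u := hA.trans hu
  have hw : 0 ≤ (1 - exp (-(y * u))) / u ^ 2 :=
    div_nonneg (one_sub_exp_neg_nonneg (mul_nonneg hy hu₀.le)) (sq_nonneg u)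
  have heq : (1 - exp (-(y * u))) * g u - C * ((1 - exp (-(y * u))) / u ^ 2) =
      (1 - exp (-(y * u))) / u ^ 2 * (u ^ 2 * g u - C) := by
    field_simp
  rw [heq, Real.norm_eq_abs, abs_mul, abs_of_nonneg hw, mul_comm δ]
  exact mul_le_mul_of_nonneg_left (hgC u hu) hw

lemma abs_inv_mul_setIntegral_one_sub_exp_mul_sub_le (hg : IntegrableOn g (Ioi 0))
    (hA : 0 < A) (hgC : ∀ u > A, |u ^ 2 * g u - C| ≤ δ) (hy : 0 < y) (hL : 0 < log (1 / y)) :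
    |(y * log (1 / y))⁻¹ * (∫ u in Ioi 0, (1 - exp (-(y * u))) * g u) - C|
      ≤ A * (∫ u in Ioi 0, |g u|) / log (1 / y)
        + δ * ((y * log (1 / y))⁻¹ * ∫ u in Ioi A, (1 - exp (-(y * u))) / u ^ 2)
        + |C| * |(y * log (1 / y))⁻¹ * (∫ u in Ioi A, (1 - exp (-(y * u))) / u ^ 2) - 1| := by
  set L := log (1 / y)
  set J := ∫ u in Ioi A, (1 - exp (-(y * u))) / u ^ 2
  set inner := ∫ u in Ioc 0 A, (1 - exp (-(y * u))) * g u
  set outer := ∫ u in Ioi A, (1 - exp (-(y * u))) * g u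
  have hyL : 0 < (y * L)⁻¹ := inv_pos.2 (mul_pos hy hL)
  have hint := integrableOn_one_sub_exp_mul hg le_rfl hy.le
  have hsplit : ∫ u in Ioi 0, (1 - exp (-(y * u))) * g u = inner + outer := by
    rw [← Ioc_union_Ioi_eq_Ioi hA.le, setIntegral_union Ioc_disjoint_Ioi_same measurableSet_Ioi
      (hint.mono_set Ioc_subset_Ioi_self) (hint.mono_set (Ioi_subset_Ioi hA.le))]
  have hinner := abs_setIntegral_Ioc_one_sub_exp_mul_le hg hy.le hA.le
  have houter := abs_setIntegral_Ioi_one_sub_exp_mul_sub_le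
    (hg.mono_set (Ioi_subset_Ioi hA.le)) hA hy.le hgC
  have hdecomp : (y * L)⁻¹ * (inner + outer) - C =
      (y * L)⁻¹ * inner + (y * L)⁻¹ * (outer - C * J) + C * ((y * L)⁻¹ * J - 1) := by ring
  rw [hsplit, hdecomp]
  refine (abs_add_three _ _ _).trans (add_le_add_three ?_ ?_ (abs_mul _ _).le)
  · calc |(y * L)⁻¹ * inner| = (y * L)⁻¹ * |inner| := by rw [abs_mul, abs_of_pos hyL]
      _ ≤ (y * L)⁻¹ * (y * A * ∫ u in Ioi 0, |g u|) := by gcongr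
      _ = A * (∫ u in Ioi 0, |g u|) / L := by field_simp
  · calc |(y * L)⁻¹ * (outer - C * J)| = (y * L)⁻¹ * |outer - C * J| := by
          rw [abs_mul, abs_of_pos hyL]
      _ ≤ (y * L)⁻¹ * (δ * J) := by gcongr
      _ = δ * ((y * L)⁻¹ * J) := by ring

theorem tendsto_inv_mul_setIntegral_one_sub_exp_mul_of_tendsto_sq_mul
    (hg : IntegrableOn g (Ioi 0)) (hgC : Tendsto (fun x => x ^ 2 * g x) atTop (𝓝 C)) :
    Tendsto (fun y => (y * log (1 / y))⁻¹ * ∫ u in Ioi 0, (1 - exp (-(y * u))) * g u)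
      (𝓝[>] 0) (𝓝 C) := by
  rw [Metric.tendsto_nhds]
  intro ε hε
  obtain ⟨A, hA, hgA⟩ : ∃ A > 0, ∀ u > A, |u ^ 2 * g u - C| ≤ ε / 2 := by
    obtain ⟨A₀, hA₀⟩ := eventually_atTop.1 (Metric.tendsto_nhds.1 hgC (ε / 2) (half_pos hε))
    exact ⟨max A₀ 1, by positivity, fun u hu => (hA₀ u ((le_max_left _ _).trans hu.le)).le⟩
  have hJ := tendsto_inv_mul_setIntegral_one_sub_exp_div_sq hA
  have hbound : Tendsto (fun y => A * (∫ u in Ioi 0, |g u|) / log (1 / y)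
        + ε / 2 * ((y * log (1 / y))⁻¹ * ∫ u in Ioi A, (1 - exp (-(y * u))) / u ^ 2)
        + |C| * |(y * log (1 / y))⁻¹ * (∫ u in Ioi A, (1 - exp (-(y * u))) / u ^ 2) - 1|)
      (𝓝[>] 0) (𝓝 (ε / 2)) := by
    simpa using ((tendsto_const_nhds.div_atTop tendsto_log_one_div_nhdsGT_zero).add
      (hJ.const_mul (ε / 2))).add ((hJ.sub_const 1).abs.const_mul |C|)
  filter_upwards [self_mem_nhdsWithin, tendsto_log_one_div_nhdsGT_zero.eventually_gt_atTop 0,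
    hbound.eventually (gt_mem_nhds (half_lt_self hε))] with y (hy : 0 < y) hL hlt
  rw [Real.dist_eq]
  exact (abs_inv_mul_setIntegral_one_sub_exp_mul_sub_le hg hA hgA hy hL).trans_lt hlt

end Tail

lemma integrableOn_measure_Ioi_toReal (ν : Measure ℝ) (hint : Integrable (fun l : ℝ => l) ν) :
    IntegrableOn (fun u => (ν (Ioi u)).toReal) (Ioi 0) := by
  have hmeas : Measurable fun u => ν (Ioi u) :=
    Antitone.measurable fun a b hab => measure_mono (Ioi_subset_Ioi hab)
  refine integrable_toReal_of_lintegral_ne_top hmeas.aemeasurable ?_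
  have hlayer := lintegral_eq_lintegral_meas_lt ν (f := fun l => max l 0)
    (ae_of_all _ fun l => le_max_right l 0) (measurable_id.max measurable_const).aemeasurable
  have hsets : ∀ t ∈ Ioi (0 : ℝ), ν (Ioi t) = ν {l | t < max l 0} := fun t (ht : 0 < t) => by
    congr 1
    ext l
    simp [not_lt.2 ht.le]
  rw [setLIntegral_congr_fun measurableSet_Ioi hsets, ← hlayer]
  simpa using hint.lintegral_lt_top.ne

theorem tail_integral_asymptotic_index_two_general
    (ν : Measure ℝ)
    (hint : Integrable (fun l : ℝ => l) ν)
    (C : ℝ)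
    (htail : Tendsto (fun x : ℝ => x ^ 2 * (ν (Set.Ioi x)).toReal)
      atTop (nhds C)) :
    Tendsto
      (fun y : ℝ =>
        (y * Real.log (1 / y))⁻¹ * ∫ u in Set.Ioi (0 : ℝ),
          (1 - Real.exp (-(y * u))) * (ν (Set.Ioi u)).toReal)
      (nhdsWithin 0 (Set.Ioi 0)) (nhds C) :=
  tendsto_inv_mul_setIntegral_one_sub_exp_mul_of_tendsto_sq_mul
    (integrableOn_measure_Ioi_toReal ν hint) htail

/-- Let `ν` be a measure on `(0,∞)` with finite, positive mean, and suppose its tail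
satisfies `ν̄(x) ~ C x^{-2}` as `x → ∞` for some `C > 0`. Then
`lim_{y→0⁺} (y log(1/y))⁻¹ ∫_0^∞ (1 - e^{-y u}) ν̄(u) du = C`. -/
theorem tail_integral_asymptotic_index_two
    (ν : Measure ℝ) (hν0 : ν (Set.Iic 0) = 0)
    (hint : Integrable (fun l : ℝ => l) ν)
    (hmpos : 0 < ∫ l, l ∂ν)
    (C : ℝ) (hC : 0 < C)
    (htail : Tendsto (fun x : ℝ => x ^ 2 * (ν (Set.Ioi x)).toReal)
      atTop (nhds C)) :
    Tendsto
      (fun y : ℝ =>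
        (y * Real.log (1 / y))⁻¹ * ∫ u in Set.Ioi (0 : ℝ),
          (1 - Real.exp (-(y * u))) * (ν (Set.Ioi u)).toReal)
      (nhdsWithin 0 (Set.Ioi 0)) (nhds C) :=
  tail_integral_asymptotic_index_two_general ν hint C htail
end
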